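/- For all radially symmetric $f \in H^1(\mathbb{R}^3)$ there is a constant $C > 0$ (independent of $f$) such that $\||x| f\|_{L^\infty(\mathbb{R}^3)} \le C \|f\|_{H^1(\mathbb{R}^3)}$, i.e. $|x||f(x)| \le C\|f\|_{H^1}$ for almost every $x \in \mathbb{R}^3$. -/

import Mathlib

/-!
Write a radial `f` as `f x = g ‖x‖`. The weighted square `φ s = s² ‖g s‖²` is integrable on
`(r, ∞)` and so is its derivative, hence `φ → 0` at infinity and
`φ r = -∫_r^∞ φ' ≤ ∫_r^∞ s² (‖g‖² + ‖g'‖²)`, since `-φ' ≤ 2 s² ‖g‖ ‖g'‖`.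
In polar coordinates the right-hand side is `(4π)⁻¹ (∫ |f|² + ∫ |∂ᵣ f|²) ≤ (4π)⁻¹ ‖f‖²_{H¹}`,
because the radial derivative is bounded by the full gradient.
-/

open MeasureTheory Real

noncomputable abbrev E3 : Type := EuclideanSpace ℝ (Fin 3)

/-- Squared `L²` norm ∫|f|². -/
noncomputable def mSq (f : E3 → ℂ) : ℝ := ∫ x, ‖f x‖ ^ 2

/-- Squared `L²` norm of the gradient ∫|∇f|². -/
noncomputable def gSq (f : E3 → ℂ) : ℝ :=
  ∫ x, ∑ j : Fin 3, ‖fderiv ℝ f x (EuclideanSpace.single j 1)‖ ^ 2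

open Set Filter Topology

section OneDim

variable {F : Type*} [NormedAddCommGroup F] [InnerProductSpace ℝ F]

lemma natCast_mul_pow_pred_le {k : ℕ} {r s : ℝ} (hr : 0 < r) (hs : r ≤ s) :
    k * s ^ (k - 1) ≤ k / r * s ^ k := by
  rcases k with _ | k
  · simp
  · rw [pow_succ, Nat.add_sub_cancel, div_mul_eq_mul_div, le_div_iff₀ hr, mul_assoc]
    gcongr
    exact pow_nonneg (hr.le.trans hs) k

lemma abs_weighted_normSq_deriv_le {k : ℕ} {r s : ℝ} (hr : 0 < r) (hs : r ≤ s) (u v : F) :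
    |k * s ^ (k - 1) * ‖u‖ ^ 2 + s ^ k * (2 * inner ℝ u v)| ≤
      (k / r + 1) * (s ^ k * ‖u‖ ^ 2) + s ^ k * ‖v‖ ^ 2 := by
  have hk := mul_le_mul_of_nonneg_right (natCast_mul_pow_pred_le (k := k) hr hs) (sq_nonneg ‖u‖)
  have hin := abs_le.1 (abs_real_inner_le_norm u v)
  have hs0 : 0 ≤ s := hr.le.trans hs
  have hsk : 0 ≤ s ^ k := pow_nonneg hs0 k
  rw [abs_le]
  constructor <;> nlinarith [mul_le_mul_of_nonneg_left hin.1 (by positivity : (0 : ℝ) ≤ 2 * s ^ k),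
    mul_le_mul_of_nonneg_left hin.2 (by positivity : (0 : ℝ) ≤ 2 * s ^ k),
    mul_nonneg hsk (sq_nonneg (‖u‖ - ‖v‖)), mul_nonneg hsk (sq_nonneg (‖u‖ + ‖v‖)),
    (by positivity : (0 : ℝ) ≤ k * s ^ (k - 1) * ‖u‖ ^ 2)]

lemma neg_weighted_normSq_deriv_le {k : ℕ} {s : ℝ} (hs : 0 ≤ s) (u v : F) :
    -(k * s ^ (k - 1) * ‖u‖ ^ 2 + s ^ k * (2 * inner ℝ u v)) ≤ s ^ k * (‖u‖ ^ 2 + ‖v‖ ^ 2) := by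
  have hin := real_inner_le_norm (-u) v
  rw [inner_neg_left, norm_neg] at hin
  have hsk : 0 ≤ s ^ k := pow_nonneg hs k
  nlinarith [mul_le_mul_of_nonneg_left hin hsk, mul_nonneg hsk (sq_nonneg (‖u‖ - ‖v‖)),
    (by positivity : (0 : ℝ) ≤ k * s ^ (k - 1) * ‖u‖ ^ 2)]

lemma pow_mul_norm_sq_le_integral_Ioi {g g' : ℝ → F} {k : ℕ} {r : ℝ} (hr : 0 < r)
    (hg : ∀ s ∈ Ici r, HasDerivAt g (g' s) s) (hg' : ContinuousOn g' (Ioi r))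
    (hgi : IntegrableOn (fun s => s ^ k * ‖g s‖ ^ 2) (Ioi r))
    (hg'i : IntegrableOn (fun s => s ^ k * ‖g' s‖ ^ 2) (Ioi r)) :
    r ^ k * ‖g r‖ ^ 2 ≤ ∫ s in Ioi r, s ^ k * (‖g s‖ ^ 2 + ‖g' s‖ ^ 2) := by
  set φ' : ℝ → ℝ := fun s => k * s ^ (k - 1) * ‖g s‖ ^ 2 + s ^ k * (2 * inner ℝ (g s) (g' s))
  have hφ : ∀ s ∈ Ici r, HasDerivAt (fun s => s ^ k * ‖g s‖ ^ 2) (φ' s) s := fun s hs =>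
    (hasDerivAt_pow k s).mul (hg s hs).norm_sq
  have hφ'_meas : AEStronglyMeasurable φ' (volume.restrict (Ioi r)) := by
    have hgc : ContinuousOn g (Ioi r) := fun s hs =>
      (hg s (mem_Ici_of_Ioi hs)).continuousAt.continuousWithinAt
    exact ContinuousOn.aestronglyMeasurable (by fun_prop) measurableSet_Ioi
  have hφ'_int : IntegrableOn φ' (Ioi r) :=
    ((hgi.const_mul (k / r + 1)).add hg'i).mono' hφ'_meas <|
      (ae_restrict_iff' measurableSet_Ioi).2 <| .of_forall fun s (hs : r < s) =>
        abs_weighted_normSq_deriv_le hr hs.le (g s) (g' s)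
  have hφ_lim : Tendsto (fun s => s ^ k * ‖g s‖ ^ 2) atTop (𝓝 0) :=
    tendsto_zero_of_hasDerivAt_of_integrableOn_Ioi (fun s hs => hφ s (mem_Ici_of_Ioi hs))
      hφ'_int hgi
  have hFTC : ∫ s in Ioi r, φ' s = 0 - r ^ k * ‖g r‖ ^ 2 :=
    integral_Ioi_of_hasDerivAt_of_tendsto' hφ hφ'_int hφ_lim
  calc r ^ k * ‖g r‖ ^ 2 = ∫ s in Ioi r, -φ' s := by rw [integral_neg, hFTC, zero_sub, neg_neg]
    _ ≤ _ := setIntegral_mono_on hφ'_int.neg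
        ((hgi.add hg'i).congr_fun (fun s _ => (mul_add _ _ _).symm) measurableSet_Ioi)
        measurableSet_Ioi fun s (hs : r < s) =>
          neg_weighted_normSq_deriv_le (hr.trans hs).le (g s) (g' s)

end OneDim

lemma eq_of_radial_of_norm_eq_one {E F : Type*} [NormedAddCommGroup E] [NormedSpace ℝ E]
    {f : E → F} (hrad : ∀ x y : E, ‖x‖ = ‖y‖ → f x = f y) {e : E} (he : ‖e‖ = 1) (x : E) :
    f x = f (‖x‖ • e) :=
  hrad _ _ (by rw [norm_smul, he, norm_norm, mul_one])

section Radial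

variable {E F : Type*} [NormedAddCommGroup E] [NormedSpace ℝ E]
  [NormedAddCommGroup F] [NormedSpace ℝ F]

lemma hasDerivAt_comp_smul {f : E → F} {t : ℝ} (u : E) (hf : DifferentiableAt ℝ f (t • u)) :
    HasDerivAt (fun s : ℝ => f (s • u)) (fderiv ℝ f (t • u) u) t := by
  simpa [Function.comp_def] using hf.hasFDerivAt.comp_hasDerivAt t ((hasDerivAt_id t).smul_const u)

lemma fderiv_smul_apply_eq_of_radial {f : E → F} (hf : Differentiable ℝ f)
    (hrad : ∀ x y : E, ‖x‖ = ‖y‖ → f x = f y) {u v : E} (huv : ‖u‖ = ‖v‖) (t : ℝ) :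
    fderiv ℝ f (t • u) u = fderiv ℝ f (t • v) v := by
  have hline : (fun s : ℝ => f (s • u)) = fun s => f (s • v) :=
    funext fun s => hrad _ _ (by rw [norm_smul, norm_smul, huv])
  exact (hasDerivAt_comp_smul u (hf _)).unique (hline ▸ hasDerivAt_comp_smul v (hf _))

end Radial

lemma norm_sq_apply_le_sum {ι F : Type*} [Fintype ι] [DecidableEq ι]
    [NormedAddCommGroup F] [NormedSpace ℝ F]
    (A : EuclideanSpace ℝ ι →L[ℝ] F) (u : EuclideanSpace ℝ ι) :
    ‖A u‖ ^ 2 ≤ ‖u‖ ^ 2 * ∑ j, ‖A (EuclideanSpace.single j 1)‖ ^ 2 := by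
  have hexp : A u = ∑ j, u j • A (EuclideanSpace.single j 1) := by
    conv_lhs => rw [← (EuclideanSpace.basisFun ι ℝ).sum_repr u]
    simp
  calc ‖A u‖ ^ 2 ≤ (∑ j, |u j| * ‖A (EuclideanSpace.single j 1)‖) ^ 2 := by
        rw [hexp]
        gcongr
        refine (norm_sum_le _ _).trans_eq (Finset.sum_congr rfl fun j _ => ?_)
        rw [norm_smul, Real.norm_eq_abs]
    _ ≤ (∑ j, |u j| ^ 2) * ∑ j, ‖A (EuclideanSpace.single j 1)‖ ^ 2 :=
        Finset.sum_mul_sq_le_sq_mul_sq _ _ _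
    _ = ‖u‖ ^ 2 * ∑ j, ‖A (EuclideanSpace.single j 1)‖ ^ 2 := by
        simp [EuclideanSpace.norm_sq_eq]

lemma norm_sq_fderiv_radial_le_sum {ι F : Type*} [Fintype ι] [DecidableEq ι]
    [NormedAddCommGroup F] [NormedSpace ℝ F] {f : EuclideanSpace ℝ ι → F}
    (hf : Differentiable ℝ f) (hrad : ∀ x y : EuclideanSpace ℝ ι, ‖x‖ = ‖y‖ → f x = f y)
    {e : EuclideanSpace ℝ ι} (he : ‖e‖ = 1) (x : EuclideanSpace ℝ ι) :
    ‖fderiv ℝ f (‖x‖ • e) e‖ ^ 2 ≤ ∑ j, ‖fderiv ℝ f x (EuclideanSpace.single j 1)‖ ^ 2 := by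
  obtain ⟨u, hu, hxu⟩ : ∃ u : EuclideanSpace ℝ ι, ‖u‖ = 1 ∧ ‖x‖ • u = x := by
    by_cases hx : x = 0
    · exact ⟨e, he, by simp [hx]⟩
    · exact ⟨‖x‖⁻¹ • x, by simp [norm_smul, hx], by simp [smul_smul, hx]⟩
  rw [fderiv_smul_apply_eq_of_radial hf hrad (he.trans hu.symm), hxu]
  simpa [hu] using norm_sq_apply_le_sum (fderiv ℝ f x) u

noncomputable def sphereArea : ℝ := 3 * volume.real (Metric.ball (0 : E3) 1)

lemma sphereArea_pos : 0 < sphereArea :=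
  mul_pos three_pos <|
    ENNReal.toReal_pos (Metric.measure_ball_pos _ _ one_pos).ne' measure_ball_lt_top.ne

lemma integrable_norm_comp_iff (w : ℝ → ℝ) :
    Integrable (fun x : E3 => w ‖x‖) ↔ IntegrableOn (fun s => s ^ 2 * w s) (Ioi 0) := by
  simpa [finrank_euclideanSpace_fin] using integrable_fun_norm_addHaar (volume : Measure E3) (f := w)

lemma integral_norm_comp (w : ℝ → ℝ) :
    ∫ x : E3, w ‖x‖ = sphereArea * ∫ s in Ioi 0, s ^ 2 * w s := by
  simp [integral_fun_norm_addHaar (volume : Measure E3) w, sphereArea, mul_assoc]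

section Profile

variable {f : E3 → ℂ} {e : E3}

lemma integrableOn_profile (hrad : ∀ x y : E3, ‖x‖ = ‖y‖ → f x = f y) (he : ‖e‖ = 1)
    (hf2 : Integrable (fun x => ‖f x‖ ^ 2)) :
    IntegrableOn (fun s => s ^ 2 * ‖f (s • e)‖ ^ 2) (Ioi 0) :=
  (integrable_norm_comp_iff fun s => ‖f (s • e)‖ ^ 2).1 <| by
    simpa only [← eq_of_radial_of_norm_eq_one hrad he] using hf2

lemma integrableOn_profile_deriv (hf : ContDiff ℝ 1 f)
    (hrad : ∀ x y : E3, ‖x‖ = ‖y‖ → f x = f y) (he : ‖e‖ = 1)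
    (hdf2 : Integrable (fun x =>
      ∑ j : Fin 3, ‖fderiv ℝ f x (EuclideanSpace.single j 1)‖ ^ 2)) :
    IntegrableOn (fun s => s ^ 2 * ‖fderiv ℝ f (s • e) e‖ ^ 2) (Ioi 0) := by
  have := hf.continuous_fderiv one_ne_zero
  refine (integrable_norm_comp_iff fun s => ‖fderiv ℝ f (s • e) e‖ ^ 2).1 <|
    hdf2.mono' (by fun_prop) (.of_forall fun x => ?_)
  simpa using norm_sq_fderiv_radial_le_sum (hf.differentiable one_ne_zero) hrad he x

lemma sphereArea_mul_integral_profile_le (hf : ContDiff ℝ 1 f)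
    (hrad : ∀ x y : E3, ‖x‖ = ‖y‖ → f x = f y) (he : ‖e‖ = 1)
    (hf2 : Integrable (fun x => ‖f x‖ ^ 2))
    (hdf2 : Integrable (fun x =>
      ∑ j : Fin 3, ‖fderiv ℝ f x (EuclideanSpace.single j 1)‖ ^ 2)) :
    sphereArea * ∫ s in Ioi 0, s ^ 2 * (‖f (s • e)‖ ^ 2 + ‖fderiv ℝ f (s • e) e‖ ^ 2) ≤
      mSq f + gSq f := by
  have hprofile := (integrable_norm_comp_iff _).2 <|
    ((integrableOn_profile hrad he hf2).add (integrableOn_profile_deriv hf hrad he hdf2)).congr_fun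
      (fun s _ => (mul_add _ _ _).symm) measurableSet_Ioi
  rw [← integral_norm_comp, mSq, gSq, ← integral_add hf2 hdf2]
  refine integral_mono hprofile (hf2.add hdf2) fun x => ?_
  rw [← eq_of_radial_of_norm_eq_one hrad he x]
  exact add_le_add le_rfl (norm_sq_fderiv_radial_le_sum (hf.differentiable one_ne_zero) hrad he x)

end Profile

lemma sphereArea_mul_sq_le (f : E3 → ℂ) (hf : ContDiff ℝ 1 f)
    (hrad : ∀ x y : E3, ‖x‖ = ‖y‖ → f x = f y)
    (hf2 : Integrable (fun x => ‖f x‖ ^ 2))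
    (hdf2 : Integrable (fun x =>
      ∑ j : Fin 3, ‖fderiv ℝ f x (EuclideanSpace.single j 1)‖ ^ 2)) (x : E3) :
    sphereArea * (‖x‖ * ‖f x‖) ^ 2 ≤ mSq f + gSq f := by
  set e : E3 := EuclideanSpace.single 0 1
  have he : ‖e‖ = 1 := by simp [e]
  have hbound := sphereArea_mul_integral_profile_le hf hrad he hf2 hdf2
  rcases (norm_nonneg x).eq_or_lt with hx | hx
  · rw [← hx, zero_mul, sq, mul_zero, mul_zero]
    exact (mul_nonneg sphereArea_pos.le (setIntegral_nonneg measurableSet_Ioi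
      fun s _ => by positivity)).trans hbound
  have hsub : Ioi ‖x‖ ⊆ Ioi 0 := Ioi_subset_Ioi hx.le
  have hgi := integrableOn_profile hrad he hf2
  have hg'i := integrableOn_profile_deriv hf hrad he hdf2
  have hg'c : Continuous fun s : ℝ => fderiv ℝ f (s • e) e := by
    have := hf.continuous_fderiv one_ne_zero
    fun_prop
  have h1d := pow_mul_norm_sq_le_integral_Ioi hx
    (fun s _ => hasDerivAt_comp_smul e ((hf.differentiable one_ne_zero) _)) hg'c.continuousOn
    (hgi.mono_set hsub) (hg'i.mono_set hsub)
  refine le_trans ?_ hbound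
  rw [mul_pow, eq_of_radial_of_norm_eq_one hrad he x]
  refine mul_le_mul_of_nonneg_left (h1d.trans (setIntegral_mono_set ?_ ?_ hsub.eventuallyLE))
    sphereArea_pos.le
  · exact (hgi.add hg'i).congr_fun (fun s _ => (mul_add _ _ _).symm) measurableSet_Ioi
  · exact (ae_restrict_iff' measurableSet_Ioi).2 (.of_forall fun s _ => by positivity)

/-- Strauss radial Sobolev embedding in `ℝ³`. -/
theorem stmt7 :
    ∃ C > 0, ∀ f : E3 → ℂ,
      ContDiff ℝ 1 f →
      (∀ x y : E3, ‖x‖ = ‖y‖ → f x = f y) →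
      Integrable (fun x => ‖f x‖ ^ 2) →
      Integrable (fun x =>
        ∑ j : Fin 3, ‖fderiv ℝ f x (EuclideanSpace.single j 1)‖ ^ 2) →
      ∀ᵐ x : E3, ‖x‖ * ‖f x‖ ≤ C * Real.sqrt (mSq f + gSq f) := by
  have hA := Real.sqrt_pos.2 sphereArea_pos
  refine ⟨(√sphereArea)⁻¹, inv_pos.2 hA, fun f hf hrad hf2 hdf2 => .of_forall fun x => ?_⟩
  rw [inv_mul_eq_div, le_div_iff₀' hA]
  calc √sphereArea * (‖x‖ * ‖f x‖) = √(sphereArea * (‖x‖ * ‖f x‖) ^ 2) := by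
        rw [Real.sqrt_mul sphereArea_pos.le, Real.sqrt_sq (by positivity)]
    _ ≤ √(mSq f + gSq f) := Real.sqrt_le_sqrt (sphereArea_mul_sq_le f hf hrad hf2 hdf2 x)
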